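/- arXiv:0812.2621 — 3 statements merged into one kernel-verified Lean document; each statement's English description precedes it below -/
import Mathlib

section
/- Let J be a finite index set with |J| ≥ 2, and let μ be a probability measure on ℝ^J such that for each j ∈ J, the conditional distribution of the j-th coordinate given the others admits a density bounded by a constant c. Suppose Φ : ℝ^J → ℝ is diagonally monotone: Φ is monotone nondecreasing with respect to the coordinatewise partial order, and Φ(x + t·e) ≥ Φ(x) + t for all x and t > 0, with e = (1,…,1). Then for every a ∈ ℝ and ε > 0, μ{x ∈ ℝ^J : Φ(x) ∈ [a, a+ε]} ≤ |J| · c · ε. -/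
/-!
Stollmann's argument. For the level `b = a + ε`, let `τ x` be the time at which the diagonal ray
`s ↦ x + s • 1` reaches `b`. Diagonal monotonicity makes `τ` antitone and 1-Lipschitz with
`τ (x + s • 1) = τ x - s`. If `Φ x ∈ [a, a + ε]` then `0 ≤ τ x ≤ ε`, so for `t > ε` the function `τ`
changes sign along the staircase from `x` to `x + t • 1` that raises the coordinates by `t` one at a
time. The step where the sign changes sorts `x` into one of `|J|` sets; the `k`-th set meets every
line in the direction of the `k`-th raised coordinate in a set of diameter at most `t`, so the
conditional density bound gives it measure at most `c t`. Finally let `t` decrease to `ε`.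
-/

open MeasureTheory
open scoped ENNReal

def DiagonallyMonotone {J : Type*} (Φ : (J → ℝ) → ℝ) : Prop :=
  Monotone Φ ∧ ∀ (x : J → ℝ) (t : ℝ), 0 < t → Φ x + t ≤ Φ (x + t • (1 : J → ℝ))

noncomputable def diagonalHittingTime {J : Type*} (Φ : (J → ℝ) → ℝ) (b : ℝ) (x : J → ℝ) : ℝ :=
  sInf {t : ℝ | b ≤ Φ (x + t • 1)}

namespace DiagonallyMonotone

variable {J : Type*} {Φ : (J → ℝ) → ℝ} (hΦ : DiagonallyMonotone Φ) {b : ℝ}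
include hΦ

lemma apply_add_smul_le (x : J → ℝ) {s t : ℝ} (hst : s ≤ t) :
    Φ (x + s • 1) + (t - s) ≤ Φ (x + t • 1) := by
  rcases hst.eq_or_lt with rfl | hlt
  · simp
  · simpa [add_assoc, ← add_smul] using hΦ.2 (x + s • 1) (t - s) (sub_pos.2 hlt)

lemma bddBelow_setOf_le (x : J → ℝ) : BddBelow {t : ℝ | b ≤ Φ (x + t • 1)} := by
  refine ⟨min 0 (b - Φ x), fun t (ht : b ≤ _) => ?_⟩
  rcases le_or_gt 0 t with h | h
  · exact min_le_of_left_le h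
  · have := hΦ.apply_add_smul_le x h.le
    simp only [zero_smul, add_zero] at this
    exact min_le_of_right_le (by linarith)

lemma nonempty_setOf_le (x : J → ℝ) : {t : ℝ | b ≤ Φ (x + t • 1)}.Nonempty := by
  refine ⟨max 0 (b - Φ x), ?_⟩
  have := hΦ.apply_add_smul_le x (le_max_left 0 (b - Φ x))
  simp only [zero_smul, add_zero, sub_zero] at this
  show b ≤ _
  linarith [le_max_right 0 (b - Φ x)]

lemma diagonalHittingTime_le {x : J → ℝ} {t : ℝ} (h : b ≤ Φ (x + t • 1)) :
    diagonalHittingTime Φ b x ≤ t :=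
  csInf_le (hΦ.bddBelow_setOf_le x) h

lemma le_diagonalHittingTime {x : J → ℝ} {r : ℝ} (h : ∀ t, b ≤ Φ (x + t • 1) → r ≤ t) :
    r ≤ diagonalHittingTime Φ b x :=
  le_csInf (hΦ.nonempty_setOf_le x) h

lemma diagonalHittingTime_nonneg {x : J → ℝ} (h : Φ x ≤ b) : 0 ≤ diagonalHittingTime Φ b x := by
  refine hΦ.le_diagonalHittingTime fun t ht => ?_
  by_contra! hneg
  have := hΦ.apply_add_smul_le x hneg.le
  simp only [zero_smul, add_zero] at this
  linarith

lemma diagonalHittingTime_le_of_sub_le {x : J → ℝ} {t : ℝ} (ht : 0 ≤ t) (h : b - t ≤ Φ x) :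
    diagonalHittingTime Φ b x ≤ t := by
  refine hΦ.diagonalHittingTime_le ?_
  have := hΦ.apply_add_smul_le x ht
  simp only [zero_smul, add_zero, sub_zero] at this
  linarith

lemma antitone_diagonalHittingTime : Antitone (diagonalHittingTime Φ b) := fun x y hxy =>
  csInf_le_csInf (hΦ.bddBelow_setOf_le y) (hΦ.nonempty_setOf_le x) fun _ ht =>
    ht.trans (hΦ.1 (add_le_add_left hxy _))

lemma diagonalHittingTime_add_smul_le (x : J → ℝ) (s : ℝ) :
    diagonalHittingTime Φ b (x + s • 1) ≤ diagonalHittingTime Φ b x - s := by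
  refine le_sub_iff_add_le.2 (hΦ.le_diagonalHittingTime fun t ht => ?_)
  refine le_sub_iff_add_le.1 (hΦ.diagonalHittingTime_le ?_)
  rwa [add_assoc, ← add_smul, add_sub_cancel]

lemma diagonalHittingTime_add_smul (x : J → ℝ) (s : ℝ) :
    diagonalHittingTime Φ b (x + s • 1) = diagonalHittingTime Φ b x - s := by
  refine le_antisymm (hΦ.diagonalHittingTime_add_smul_le x s) ?_
  have := hΦ.diagonalHittingTime_add_smul_le (b := b) (x + s • 1) (-s)
  rw [add_assoc, ← add_smul, add_neg_cancel, zero_smul, add_zero] at this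
  linarith

lemma lipschitzWith_diagonalHittingTime [Fintype J] :
    LipschitzWith 1 (diagonalHittingTime Φ b) := by
  refine LipschitzWith.of_le_add_mul 1 fun x y => ?_
  have hle : y ≤ x + dist x y • 1 := fun i => by
    have := (abs_sub_le_iff.1 ((Real.dist_eq _ _).symm.trans_le (dist_le_pi_dist x y i))).2
    simp only [Pi.add_apply, Pi.smul_apply, Pi.one_apply, smul_eq_mul, mul_one]
    linarith
  have := hΦ.antitone_diagonalHittingTime (b := b) hle
  rw [hΦ.diagonalHittingTime_add_smul] at this
  simp only [NNReal.coe_one, one_mul]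
  linarith

end DiagonallyMonotone

def insertCoord {J : Type*} [DecidableEq J] (j : J) (y : {i : J // i ≠ j} → ℝ) (r : ℝ) :
    J → ℝ :=
  fun i => if h : i = j then r else y ⟨i, h⟩

lemma insertCoord_add_single_le {J : Type*} [DecidableEq J] (j : J) (y : {i : J // i ≠ j} → ℝ)
    {r r' t : ℝ} (h : r + t ≤ r') : insertCoord j y r + Pi.single j t ≤ insertCoord j y r' := by
  intro i
  by_cases hij : i = j
  · subst hij
    simpa [insertCoord] using h
  · simp [insertCoord, hij]

def HasConditionalDensityLE {J : Type*} [DecidableEq J] (μ : Measure (J → ℝ)) (c : ℝ) (j : J) :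
    Prop :=
  ∃ (ν : Measure ({i : J // i ≠ j} → ℝ)) (κ : ({i : J // i ≠ j} → ℝ) → Measure ℝ),
    IsProbabilityMeasure ν ∧
    (∀ y, ∃ p : ℝ → ℝ, Measurable p ∧ (∀ r, 0 ≤ p r ∧ p r ≤ c) ∧
      κ y = volume.withDensity (fun r => ENNReal.ofReal (p r))) ∧
    (∀ A : Set (J → ℝ), MeasurableSet A →
      μ A = ∫⁻ y, κ y {r : ℝ | insertCoord j y r ∈ A} ∂ν)

lemma withDensity_ofReal_le_smul {α : Type*} [MeasurableSpace α] (μ : Measure α) {p : α → ℝ}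
    {c : ℝ} (hp : ∀ r, p r ≤ c) :
    μ.withDensity (fun r => ENNReal.ofReal (p r)) ≤ ENNReal.ofReal c • μ := by
  rw [← withDensity_const]
  exact withDensity_mono (Filter.Eventually.of_forall fun r => ENNReal.ofReal_le_ofReal (hp r))

lemma measure_le_mul_ediam {κ : Measure ℝ} {C : ℝ≥0∞} (hκ : κ ≤ C • volume) (S : Set ℝ) :
    κ S ≤ C * Metric.ediam S :=
  calc κ S ≤ (C • volume) S := hκ S
    _ = C * volume S := Measure.smul_apply C volume S
    _ ≤ C * Metric.ediam S := mul_le_mul_right (Real.volume_le_diam S) C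

lemma HasConditionalDensityLE.measure_le {J : Type*} [DecidableEq J] {μ : Measure (J → ℝ)}
    {c : ℝ} {j : J} (hμ : HasConditionalDensityLE μ c j) {A : Set (J → ℝ)} (hA : MeasurableSet A)
    {t : ℝ} (hslice : ∀ y, Metric.ediam {r : ℝ | insertCoord j y r ∈ A} ≤ ENNReal.ofReal t) :
    μ A ≤ ENNReal.ofReal c * ENNReal.ofReal t := by
  obtain ⟨ν, κ, hν, hκ, hdisint⟩ := hμ
  have hslice_le : ∀ y, κ y {r | insertCoord j y r ∈ A} ≤ ENNReal.ofReal c * ENNReal.ofReal t :=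
    fun y => by
      obtain ⟨p, -, hp, hκy⟩ := hκ y
      refine (measure_le_mul_ediam ?_ _).trans (mul_le_mul_right (hslice y) _)
      exact hκy ▸ withDensity_ofReal_le_smul volume fun r => (hp r).2
  calc μ A = ∫⁻ y, κ y {r | insertCoord j y r ∈ A} ∂ν := hdisint A hA
    _ ≤ ∫⁻ _, ENNReal.ofReal c * ENNReal.ofReal t ∂ν := lintegral_mono hslice_le
    _ = ENNReal.ofReal c * ENNReal.ofReal t := by simp

def staircase {J : Type*} {n : ℕ} (σ : J ≃ Fin n) (t : ℝ) (k : ℕ) : J → ℝ :=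
  fun i => if (σ i : ℕ) < k then t else 0

section Staircase

variable {J : Type*} {n : ℕ} (σ : J ≃ Fin n) (t : ℝ)

@[simp] lemma staircase_zero : staircase σ t 0 = 0 := by
  ext i
  simp [staircase]

lemma staircase_of_le {k : ℕ} (hk : n ≤ k) : staircase σ t k = t • 1 := by
  ext i
  simp [staircase, (σ i).isLt.trans_le hk]

lemma staircase_succ [DecidableEq J] {k : ℕ} (hk : k < n) :
    staircase σ t (k + 1) = staircase σ t k + Pi.single (σ.symm ⟨k, hk⟩) t := by
  ext i
  rcases eq_or_ne (σ i : ℕ) k with hik | hik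
  · have : i = σ.symm ⟨k, hk⟩ := σ.eq_symm_apply.2 (Fin.ext hik)
    simp [staircase, this]
  · have : i ≠ σ.symm ⟨k, hk⟩ := fun h => hik (by simp [h])
    simp [staircase, this, hik.le_iff_lt]

lemma exists_staircase_step {τ : (J → ℝ) → ℝ} {x : J → ℝ} (h0 : 0 ≤ τ x)
    (ht : τ (x + t • 1) < 0) :
    ∃ k < n, τ (x + staircase σ t (k + 1)) < 0 ∧ 0 ≤ τ (x + staircase σ t k) := by
  have hlarge : ∀ k, n ≤ k → τ (x + staircase σ t k) < 0 := fun k hk => by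
    rwa [staircase_of_le σ t hk]
  obtain ⟨k, hk, hk1⟩ := Nat.exists_not_and_succ_of_not_zero_of_exists
    (p := fun k => τ (x + staircase σ t k) < 0) (by simpa using h0) ⟨n, hlarge n le_rfl⟩
  exact ⟨k, lt_of_not_ge fun h => hk (hlarge k h), hk1, not_lt.1 hk⟩

end Staircase

lemma ediam_le_ofReal_of_forall_lt_add {S : Set ℝ} {t : ℝ} (h : ∀ r ∈ S, ∀ r' ∈ S, r' < r + t) :
    Metric.ediam S ≤ ENNReal.ofReal t := by
  refine Metric.ediam_le_of_forall_dist_le fun r hr r' hr' => ?_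
  rw [Real.dist_eq, abs_le]
  constructor <;> linarith [h r hr r' hr', h r' hr' r hr]

lemma ediam_setOf_sign_change_le {J : Type*} [DecidableEq J] {τ : (J → ℝ) → ℝ} (hτ : Antitone τ)
    (v : J → ℝ) (j : J) (y : {i : J // i ≠ j} → ℝ) (t : ℝ) :
    Metric.ediam {r : ℝ | insertCoord j y r ∈
      {x | τ (x + (v + Pi.single j t)) < 0 ∧ 0 ≤ τ (x + v)}} ≤ ENNReal.ofReal t := by
  refine ediam_le_ofReal_of_forall_lt_add ?_
  rintro r ⟨hr, -⟩ r' ⟨-, hr'⟩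
  by_contra! hle
  have hmono : insertCoord j y r + (v + Pi.single j t) ≤ insertCoord j y r' + v := by
    rw [add_comm v, ← add_assoc]
    exact add_le_add_left (insertCoord_add_single_le j y hle) v
  linarith [hτ hmono]

theorem measure_setOf_mem_Icc_le_of_lt {J : Type*} [Fintype J] [DecidableEq J]
    {μ : Measure (J → ℝ)} {c : ℝ} (hμ : ∀ j, HasConditionalDensityLE μ c j)
    {Φ : (J → ℝ) → ℝ} (hΦ : DiagonallyMonotone Φ) (a : ℝ) {ε t : ℝ} (hε : 0 ≤ ε) (ht : ε < t) :
    μ {x | Φ x ∈ Set.Icc a (a + ε)}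
      ≤ Fintype.card J * (ENNReal.ofReal c * ENNReal.ofReal t) := by
  set n := Fintype.card J
  set σ := Fintype.equivFin J
  set τ := diagonalHittingTime Φ (a + ε)
  set B : ℕ → Set (J → ℝ) := fun k =>
    {x | τ (x + staircase σ t (k + 1)) < 0 ∧ 0 ≤ τ (x + staircase σ t k)}
  have hcover : {x | Φ x ∈ Set.Icc a (a + ε)} ⊆ ⋃ k ∈ Finset.range n, B k := by
    rintro x ⟨hax, hxa⟩
    have hτx : τ x ≤ ε := hΦ.diagonalHittingTime_le_of_sub_le hε (by linarith)
    have hτt : τ (x + t • 1) < 0 := by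
      have := hΦ.diagonalHittingTime_add_smul (b := a + ε) x t
      linarith
    obtain ⟨k, hk, hstep⟩ := exists_staircase_step σ t (hΦ.diagonalHittingTime_nonneg hxa) hτt
    exact Set.mem_biUnion (Finset.mem_range.2 hk) hstep
  have hτ : Continuous τ := hΦ.lipschitzWith_diagonalHittingTime.continuous
  have hB : ∀ k < n, μ (B k) ≤ ENNReal.ofReal c * ENNReal.ofReal t := by
    intro k hk
    refine (hμ (σ.symm ⟨k, hk⟩)).measure_le ?_ fun y => ?_
    · exact (measurableSet_lt (hτ.comp (continuous_add_const _)).measurable measurable_const).inter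
        (measurableSet_le measurable_const (hτ.comp (continuous_add_const _)).measurable)
    · simp only [B, staircase_succ σ t hk]
      exact ediam_setOf_sign_change_le hΦ.antitone_diagonalHittingTime _ _ y t
  calc μ {x | Φ x ∈ Set.Icc a (a + ε)} ≤ ∑ k ∈ Finset.range n, μ (B k) :=
        (measure_mono hcover).trans (measure_biUnion_finset_le _ _)
    _ ≤ ∑ _k ∈ Finset.range n, ENNReal.ofReal c * ENNReal.ofReal t :=
        Finset.sum_le_sum fun k hk => hB k (Finset.mem_range.1 hk)
    _ = n * (ENNReal.ofReal c * ENNReal.ofReal t) := by simp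

theorem stmt_2_general {J : Type*} [Fintype J] [DecidableEq J]
    (μ : Measure (J → ℝ)) (c : ℝ)
    (hcond : ∀ j : J, ∃ (ν : Measure ({i : J // i ≠ j} → ℝ))
      (κ : ({i : J // i ≠ j} → ℝ) → Measure ℝ),
      IsProbabilityMeasure ν ∧
      (∀ y, ∃ p : ℝ → ℝ, Measurable p ∧ (∀ r, 0 ≤ p r ∧ p r ≤ c) ∧
        κ y = volume.withDensity (fun r => ENNReal.ofReal (p r))) ∧
      (∀ A : Set (J → ℝ), MeasurableSet A →
        μ A = ∫⁻ y, κ y {r : ℝ |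
          (fun i => if h : i = j then r else y ⟨i, h⟩) ∈ A} ∂ν))
    (Φ : (J → ℝ) → ℝ) (hmono : Monotone Φ)
    (hdiag : ∀ (x : J → ℝ) (t : ℝ), 0 < t →
      Φ x + t ≤ Φ (x + t • (fun _ => (1 : ℝ))))
    (a ε : ℝ) (hε : 0 < ε) :
    μ {x : J → ℝ | Φ x ∈ Set.Icc a (a + ε)}
      ≤ (Fintype.card J : ℝ≥0∞) * ENNReal.ofReal (c * ε) := by
  have hbound : ∀ t ∈ Set.Ioi ε, μ {x | Φ x ∈ Set.Icc a (a + ε)}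
      ≤ Fintype.card J * (ENNReal.ofReal c * ENNReal.ofReal t) := fun t ht =>
    measure_setOf_mem_Icc_le_of_lt hcond ⟨hmono, hdiag⟩ a hε.le ht
  have hcont :
      Continuous fun t => (Fintype.card J : ℝ≥0∞) * (ENNReal.ofReal c * ENNReal.ofReal t) :=
    (ENNReal.continuous_const_mul (ENNReal.natCast_ne_top _)).comp
      ((ENNReal.continuous_const_mul ENNReal.ofReal_ne_top).comp ENNReal.continuous_ofReal)
  rw [ENNReal.ofReal_mul' hε.le]
  exact ge_of_tendsto (hcont.tendsto ε |>.mono_left nhdsWithin_le_nhds)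
    (eventually_nhdsWithin_of_forall hbound)

/-- Stollmann/Chulaevsky concentration bound. If `μ` is a probability
measure on `ℝ^J` (`|J| ≥ 2`) whose conditional distribution of each coordinate given
the others has a density bounded by `c`, and `Φ` is diagonally monotone, then
`μ {x : Φ x ∈ [a, a+ε]} ≤ |J| · c · ε`. The conditional density hypothesis is phrased
as a disintegration of `μ` along the `j`-th coordinate. -/
theorem stmt_2 {J : Type*} [Fintype J] [DecidableEq J] (hJ : 2 ≤ Fintype.card J)
    (μ : Measure (J → ℝ)) [IsProbabilityMeasure μ] (c : ℝ) (hc : 0 ≤ c)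
    (hcond : ∀ j : J, ∃ (ν : Measure ({i : J // i ≠ j} → ℝ))
      (κ : ({i : J // i ≠ j} → ℝ) → Measure ℝ),
      IsProbabilityMeasure ν ∧
      (∀ y, ∃ p : ℝ → ℝ, Measurable p ∧ (∀ r, 0 ≤ p r ∧ p r ≤ c) ∧
        κ y = volume.withDensity (fun r => ENNReal.ofReal (p r))) ∧
      (∀ A : Set (J → ℝ), MeasurableSet A →
        μ A = ∫⁻ y, κ y {r : ℝ |
          (fun i => if h : i = j then r else y ⟨i, h⟩) ∈ A} ∂ν))
    (Φ : (J → ℝ) → ℝ) (hmono : Monotone Φ)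
    (hdiag : ∀ (x : J → ℝ) (t : ℝ), 0 < t →
      Φ x + t ≤ Φ (x + t • (fun _ => (1 : ℝ))))
    (a ε : ℝ) (hε : 0 < ε) :
    μ {x : J → ℝ | Φ x ∈ Set.Icc a (a + ε)}
      ≤ (Fintype.card J : ℝ≥0∞) * ENNReal.ofReal (c * ε) :=
  stmt_2_general μ c hcond Φ hmono hdiag a ε hε
end

section
/- Let J be a finite set and let μ = ⨂_{j∈J} μ_j be a product probability measure on ℝ^J, where each μ_j has a density on ℝ bounded by c. Let Φ : ℝ^J → ℝ be monotone nondecreasing in the coordinatewise order and satisfy Φ(x + t·e) ≥ Φ(x) + t for all x ∈ ℝ^J, t > 0 (e = (1,…,1)). Then for every a ∈ ℝ and ε > 0, μ{x : a ≤ Φ(x) ≤ a + ε} ≤ |J| · c · ε. -/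
/-!
Let `D` be the closure of the superlevel set `{Φ ≥ a}`: a closed, hence Borel, upper set (`Φ` itself
need not be measurable). By the diagonal condition, every `x` with `a ≤ Φ x ≤ a + ε` lies in `D` but
not in `s • 𝟙 + D` for any `s > ε`. Shifting `D` by `s` one coordinate at a time covers
`D \ (s • 𝟙 + D)` by `|J|` sets `D' \ (s • e_j + D')` with `D'` upper; every line in direction `e_j`
meets such a set in a set of diameter at most `s`, hence of `μ_j`-mass at most `c s`, and Fubini
bounds each piece by `c s`. Let `s ↓ ε`.
-/

open MeasureTheory Set Function
open scoped ENNReal Pointwise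

namespace MeasureTheory.Measure

variable {ι : Type*} [Fintype ι] [DecidableEq ι]

theorem pi_le_of_forall_measure_slice_le {X : ι → Type*} [∀ i, MeasurableSpace (X i)]
    (μ : ∀ i, Measure (X i)) [∀ i, IsProbabilityMeasure (μ i)] {S : Set (∀ i, X i)}
    (hS : MeasurableSet S) (j : ι) {C : ℝ≥0∞} (hC : ∀ x, μ j (update x j ⁻¹' S) ≤ C) :
    Measure.pi μ S ≤ C := by
  have hslice : ∫⋯∫⁻_{j}, S.indicator 1 ∂μ ≤ ∫⋯∫⁻_{j}, (fun _ ↦ C) ∂μ := fun x ↦ by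
    simp_rw [lmarginal_singleton, ← indicator_comp_right, lintegral_const, measure_univ, mul_one]
    exact (lintegral_indicator_one (measurable_update x hS)).trans_le (hC x)
  calc Measure.pi μ S = ∫⁻ x, S.indicator 1 x ∂Measure.pi μ := (lintegral_indicator_one hS).symm
    _ ≤ ∫⁻ _, C ∂Measure.pi μ :=
      lintegral_le_of_lmarginal_le {j} (measurable_one.indicator hS) measurable_const hslice
    _ = C := by simp

end MeasureTheory.Measure

theorem IsUpperSet.ediam_slice_diff_vadd_single_le {ι : Type*} [DecidableEq ι]
    {D : Set (ι → ℝ)} (hD : IsUpperSet D) (x : ι → ℝ) (j : ι) (s : ℝ) :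
    Metric.ediam (update x j ⁻¹' (D \ ((Pi.single j s : ι → ℝ) +ᵥ D))) ≤ ENNReal.ofReal s := by
  have hgap : ∀ r₁ ∈ update x j ⁻¹' (D \ ((Pi.single j s : ι → ℝ) +ᵥ D)),
      ∀ r₂ ∈ update x j ⁻¹' (D \ ((Pi.single j s : ι → ℝ) +ᵥ D)), r₂ - r₁ < s := by
    rintro r₁ ⟨h₁, -⟩ r₂ ⟨-, h₂⟩
    by_contra! hs
    refine h₂ (mem_vadd_set_iff_neg_vadd_mem.2 (hD (fun i ↦ ?_) h₁))
    rcases eq_or_ne i j with rfl | hij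
    · simp only [vadd_eq_add, Pi.add_apply, Pi.neg_apply, update_self, Pi.single_eq_same]
      linarith
    · simp [hij]
  refine Metric.ediam_le fun r₁ h₁ r₂ h₂ ↦ ?_
  rw [edist_dist, Real.dist_eq]
  exact ENNReal.ofReal_le_ofReal (abs_sub_lt_iff.2 ⟨hgap _ h₂ _ h₁, hgap _ h₁ _ h₂⟩).le

section UpperSet

variable {ι : Type*} [Fintype ι] [DecidableEq ι] {μ : ι → Measure ℝ}
  [∀ i, IsProbabilityMeasure (μ i)] {c : ℝ} {D : Set (ι → ℝ)}

theorem pi_diff_vadd_single_le (hμ : ∀ i, μ i ≤ ENNReal.ofReal c • volume) (hD : IsUpperSet D)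
    (hDm : MeasurableSet D) (j : ι) (s : ℝ) :
    Measure.pi μ (D \ ((Pi.single j s : ι → ℝ) +ᵥ D)) ≤ ENNReal.ofReal c * ENNReal.ofReal s :=
  Measure.pi_le_of_forall_measure_slice_le μ (hDm.diff (hDm.const_vadd _)) j fun x ↦
    calc μ j _ ≤ ENNReal.ofReal c * volume _ := hμ j _
      _ ≤ ENNReal.ofReal c * ENNReal.ofReal s := by
        gcongr
        exact (Real.volume_le_diam _).trans (hD.ediam_slice_diff_vadd_single_le x j s)

theorem pi_diff_vadd_sum_single_le (hμ : ∀ i, μ i ≤ ENNReal.ofReal c • volume)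
    (hD : IsUpperSet D) (hDm : MeasurableSet D) (v : ι → ℝ) (F : Finset ι) :
    Measure.pi μ (D \ ((∑ j ∈ F, Pi.single j (v j) : ι → ℝ) +ᵥ D))
      ≤ ∑ j ∈ F, ENNReal.ofReal c * ENNReal.ofReal (v j) := by
  induction F using Finset.induction_on with
  | empty => simp
  | insert j F hj ih =>
    set w : ι → ℝ := ∑ j ∈ F, Pi.single j (v j)
    have hsplit : D \ ((Pi.single j (v j) + w : ι → ℝ) +ᵥ D)
        ⊆ D \ (w +ᵥ D) ∪ (w +ᵥ D) \ ((Pi.single j (v j) : ι → ℝ) +ᵥ (w +ᵥ D)) := by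
      rw [add_vadd]
      exact sdiff_triangle _ _ _
    rw [Finset.sum_insert hj, Finset.sum_insert hj, add_comm (_ * _)]
    calc _ ≤ _ := measure_mono hsplit
      _ ≤ _ := measure_union_le _ _
      _ ≤ _ := add_le_add ih
        (pi_diff_vadd_single_le hμ hD.vadd (hDm.const_vadd w) j (v j))

end UpperSet

section Diagonal

variable {ι : Type*} [Fintype ι] {Φ : (ι → ℝ) → ℝ} (hmono : Monotone Φ)
  (hdiag : ∀ (x : ι → ℝ) (t : ℝ), 0 < t → Φ x + t ≤ Φ (x + t • (fun _ => (1 : ℝ))))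
include hmono hdiag

theorem le_of_mem_const_vadd_closure {a t u : ℝ} {x : ι → ℝ}
    (hx : x ∈ (fun _ : ι ↦ t) +ᵥ closure {y | a ≤ Φ y}) (hu : 0 < u) (hut : u < t) :
    a + u ≤ Φ x := by
  obtain ⟨y, hy, hxy⟩ := Metric.mem_closure_iff.1 (mem_vadd_set_iff_neg_vadd_mem.1 hx) (t - u)
    (by linarith)
  have hle : y + u • (fun _ ↦ (1 : ℝ)) ≤ x := fun i ↦ by
    have := (dist_le_pi_dist _ _ i).trans_lt hxy
    rw [Real.dist_eq, abs_lt] at this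
    simp only [vadd_eq_add, Pi.add_apply, Pi.neg_apply, Pi.smul_apply, smul_eq_mul] at this ⊢
    linarith
  calc a + u ≤ Φ y + u := by gcongr; exact hy
    _ ≤ Φ (y + u • fun _ ↦ 1) := hdiag y u hu
    _ ≤ Φ x := hmono hle

end Diagonal

theorem stmt_3_general {J : Type*} [Fintype J] (c : ℝ) (hc : 0 < c)
    (μj : J → Measure ℝ) [∀ j, IsProbabilityMeasure (μj j)]
    (hdens : ∀ j, ∃ p : ℝ → ℝ, Measurable p ∧ (∀ r, 0 ≤ p r ∧ p r ≤ c) ∧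
      μj j = volume.withDensity (fun r => ENNReal.ofReal (p r)))
    (Φ : (J → ℝ) → ℝ) (hmono : Monotone Φ)
    (hdiag : ∀ (x : J → ℝ) (t : ℝ), 0 < t →
      Φ x + t ≤ Φ (x + t • (fun _ => (1 : ℝ))))
    (a ε : ℝ) :
    Measure.pi μj {x : J → ℝ | a ≤ Φ x ∧ Φ x ≤ a + ε}
      ≤ (Fintype.card J : ℝ≥0∞) * ENNReal.ofReal (c * ε) := by
  classical
  have hμ : ∀ j, μj j ≤ ENNReal.ofReal c • volume := fun j ↦ by
    obtain ⟨p, -, hp, hμp⟩ := hdens j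
    rw [hμp, ← withDensity_const]
    exact withDensity_mono (.of_forall fun r ↦ ENNReal.ofReal_le_ofReal (hp r).2)
  set D := closure {y | a ≤ Φ y}
  have hD : IsUpperSet D := ((isUpperSet_Ici a).preimage hmono).closure
  have hbound : ∀ s, ε < s → Measure.pi μj {x | a ≤ Φ x ∧ Φ x ≤ a + ε}
      ≤ (Fintype.card J : ℝ≥0∞) * ENNReal.ofReal (c * s) := fun s hs ↦ by
    have hA : {x | a ≤ Φ x ∧ Φ x ≤ a + ε} ⊆ D \ ((∑ j, Pi.single j s : J → ℝ) +ᵥ D) := by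
      rintro x ⟨hax, hxa⟩
      refine ⟨subset_closure hax, fun hx ↦ ?_⟩
      rw [Finset.univ_sum_single (fun _ ↦ s)] at hx
      have := le_of_mem_const_vadd_closure hmono hdiag hx (u := (ε + s) / 2) (by linarith)
        (by linarith)
      linarith
    calc _ ≤ _ := measure_mono hA
      _ ≤ _ := pi_diff_vadd_sum_single_le hμ hD isClosed_closure.measurableSet _ _
      _ = _ := by simp [ENNReal.ofReal_mul hc.le]
  refine ge_of_tendsto (x := nhdsWithin ε (Ioi ε)) ?_ (eventually_nhdsWithin_of_forall hbound)
  exact ((ENNReal.continuous_const_mul (ENNReal.natCast_ne_top _)).comp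
    (ENNReal.continuous_ofReal.comp (continuous_const.mul continuous_id))).continuousWithinAt

/-- concentration bound for a product measure `μ = ⨂_j μ_j` on `ℝ^J`
where each factor has a Lebesgue density bounded by `c`, and a diagonally monotone
function `Φ`: `μ {x : a ≤ Φ x ≤ a + ε} ≤ |J| · c · ε`. -/
theorem stmt_3 {J : Type*} [Fintype J] [Nonempty J] (c : ℝ) (hc : 0 < c)
    (μj : J → Measure ℝ) [∀ j, IsProbabilityMeasure (μj j)]
    (hdens : ∀ j, ∃ p : ℝ → ℝ, Measurable p ∧ (∀ r, 0 ≤ p r ∧ p r ≤ c) ∧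
      μj j = volume.withDensity (fun r => ENNReal.ofReal (p r)))
    (Φ : (J → ℝ) → ℝ) (hmono : Monotone Φ)
    (hdiag : ∀ (x : J → ℝ) (t : ℝ), 0 < t →
      Φ x + t ≤ Φ (x + t • (fun _ => (1 : ℝ))))
    (a ε : ℝ) (hε : 0 < ε) :
    Measure.pi μj {x : J → ℝ | a ≤ Φ x ∧ Φ x ≤ a + ε}
      ≤ (Fintype.card J : ℝ≥0∞) * ENNReal.ofReal (c * ε) :=
  stmt_3_general c hc μj hdens Φ hmono hdiag a ε
end

section
/- In ℝ^d × ℝ^d with the sup-norm ‖·‖_max on ℝ^{2d}, let u = (u₁,u₂) and u' = (u₁',u₂') be two points, let L₁,L₂,L₁',L₂' > 1 and R > 0, and suppose min{‖u − u'‖_max, ‖S(u) − u'‖_max} > 8·max{L₁+R, L₂+R, L₁'+R, L₂'+R}, where S(u) = (u₂,u₁). Define the enlarged boxes Λ̂ = Λ_{L₁+R}(u₁) × Λ_{L₂+R}(u₂) and Λ̂' = Λ_{L₁'+R}(u₁') × Λ_{L₂'+R}(u₂'), where Λ_L(v) = ∏_{i=1}^d [v^{(i)} − L, v^{(i)} +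 L]. Write Π₁, Π₂ for the projections onto the first and second factor ℝ^d, and ΠΛ̂ = Π₁Λ̂ ∪ Π₂Λ̂. Then at least one of the following five statements holds: (A) Π₁Λ̂ ∩ (Π₂Λ̂ ∪ ΠΛ̂') = ∅; (B) Π₂Λ̂ ∩ (Π₁Λ̂ ∪ ΠΛ̂') = ∅; (C) Π₁Λ̂' ∩ (ΠΛ̂ ∪ Π₂Λ̂') = ∅; (D) Π₂Λ̂' ∩ (ΠΛ̂ ∪ Π₁Λ̂') = ∅; (E) ΠΛ̂ ∩ ΠΛ̂' = ∅. -/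
/-!
Call a centre isolated if it is more than `ρ` away from the other three. If some cross distance,
say `dist x₁ y₁`, is at most `ρ`, the hypothesis forces `dist x₂ y₂ > 3ρ`. Then either `x₂` is
isolated, or `x₂` is `ρ`-close to `x₁` or `y₁` and hence `2ρ`-close to `y₁`; in the latter case
`dist x₁ y₂ > 3ρ` and `dist y₁ y₂ > 3ρ - 2ρ`, so `y₂` is isolated. With `ρ = 2M`, where `M`
bounds all radii, a ball around an isolated centre misses the other three balls.
-/

/-- The closed cube of half-side `L` centered at `v` in `ℝ^d` (sup-norm ball). -/
def cube {d : ℕ} (L : ℝ) (v : Fin d → ℝ) : Set (Fin d → ℝ) :=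
  {x : Fin d → ℝ | ‖x - v‖ ≤ L}

theorem cube_eq_closedBall {d : ℕ} (L : ℝ) (v : Fin d → ℝ) : cube L v = Metric.closedBall v L := by
  ext x
  simp only [cube, Set.mem_ofPred_eq, Metric.mem_closedBall, dist_eq_norm]

section FourPoints

variable {X : Type*} [PseudoMetricSpace X] {x₁ x₂ y₁ y₂ : X} {ρ : ℝ}

theorem isolated_of_dist_le (h₁₁ : dist x₁ y₁ ≤ ρ)
    (h₁ : 3 * ρ < max (dist x₁ y₁) (dist x₂ y₂)) (h₂ : 3 * ρ < max (dist x₂ y₁) (dist x₁ y₂)) :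
    (ρ < dist x₂ x₁ ∧ ρ < dist x₂ y₁ ∧ ρ < dist x₂ y₂) ∨
      (ρ < dist y₂ x₁ ∧ ρ < dist y₂ x₂ ∧ ρ < dist y₂ y₁) := by
  have hρ : 0 ≤ ρ := dist_nonneg.trans h₁₁
  have h₂₂ : 3 * ρ < dist x₂ y₂ := (lt_max_iff.mp h₁).resolve_left (by linarith)
  by_cases hx₂ : ρ < dist x₂ x₁ ∧ ρ < dist x₂ y₁
  · exact .inl ⟨hx₂.1, hx₂.2, by linarith⟩
  have h₂₁ : dist x₂ y₁ ≤ 2 * ρ := by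
    rcases not_and_or.mp hx₂ with h | h
    · linarith [not_lt.mp h, dist_triangle x₂ x₁ y₁]
    · linarith [not_lt.mp h]
  have h₁₂ : 3 * ρ < dist x₁ y₂ := (lt_max_iff.mp h₂).resolve_left (by linarith)
  refine .inr ⟨?_, ?_, ?_⟩
  · rw [dist_comm]; linarith
  · rw [dist_comm]; linarith
  · linarith [dist_triangle x₂ y₁ y₂, dist_comm y₁ y₂]

theorem four_point_separation
    (h₁ : 3 * ρ < max (dist x₁ y₁) (dist x₂ y₂)) (h₂ : 3 * ρ < max (dist x₂ y₁) (dist x₁ y₂)) :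
    (ρ < dist x₁ x₂ ∧ ρ < dist x₁ y₁ ∧ ρ < dist x₁ y₂) ∨
      (ρ < dist x₂ x₁ ∧ ρ < dist x₂ y₁ ∧ ρ < dist x₂ y₂) ∨
      (ρ < dist y₁ x₁ ∧ ρ < dist y₁ x₂ ∧ ρ < dist y₁ y₂) ∨
      (ρ < dist y₂ x₁ ∧ ρ < dist y₂ x₂ ∧ ρ < dist y₂ y₁) ∨
      (ρ < dist x₁ y₁ ∧ ρ < dist x₁ y₂ ∧ ρ < dist x₂ y₁ ∧ ρ < dist x₂ y₂) := by
  rcases le_or_gt (dist x₁ y₁) ρ with h₁₁ | h₁₁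
  · have := isolated_of_dist_le h₁₁ h₁ h₂
    tauto
  rcases le_or_gt (dist x₂ y₂) ρ with h₂₂ | h₂₂
  · have := isolated_of_dist_le h₂₂ (max_comm (dist x₁ y₁) _ ▸ h₁) (max_comm (dist x₂ y₁) _ ▸ h₂)
    tauto
  rcases le_or_gt (dist x₂ y₁) ρ with h₂₁ | h₂₁
  · have := isolated_of_dist_le h₂₁ h₂ h₁
    tauto
  rcases le_or_gt (dist x₁ y₂) ρ with h₁₂ | h₁₂
  · have := isolated_of_dist_le h₁₂ (max_comm (dist x₂ y₁) _ ▸ h₂) (max_comm (dist x₁ y₁) _ ▸ h₁)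
    tauto
  exact .inr (.inr (.inr (.inr ⟨h₁₁, h₁₂, h₂₁, h₂₂⟩)))

open Metric in
theorem closedBall_separation {r₁ r₂ s₁ s₂ M : ℝ}
    (hr₁ : r₁ ≤ M) (hr₂ : r₂ ≤ M) (hs₁ : s₁ ≤ M) (hs₂ : s₂ ≤ M)
    (h₁ : 6 * M < max (dist x₁ y₁) (dist x₂ y₂)) (h₂ : 6 * M < max (dist x₂ y₁) (dist x₁ y₂)) :
    (closedBall x₁ r₁ ∩ (closedBall x₂ r₂ ∪ (closedBall y₁ s₁ ∪ closedBall y₂ s₂)) = ∅) ∨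
      (closedBall x₂ r₂ ∩ (closedBall x₁ r₁ ∪ (closedBall y₁ s₁ ∪ closedBall y₂ s₂)) = ∅) ∨
      (closedBall y₁ s₁ ∩ ((closedBall x₁ r₁ ∪ closedBall x₂ r₂) ∪ closedBall y₂ s₂) = ∅) ∨
      (closedBall y₂ s₂ ∩ ((closedBall x₁ r₁ ∪ closedBall x₂ r₂) ∪ closedBall y₁ s₁) = ∅) ∨
      ((closedBall x₁ r₁ ∪ closedBall x₂ r₂) ∩ (closedBall y₁ s₁ ∪ closedBall y₂ s₂) = ∅) := by
  have far {p q : X} {r s : ℝ} (hr : r ≤ M) (hs : s ≤ M) (h : 2 * M < dist p q) :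
      Disjoint (closedBall p r) (closedBall q s) :=
    closedBall_disjoint_closedBall (by linarith)
  simp only [← Set.disjoint_iff_inter_eq_empty, Set.disjoint_union_left, Set.disjoint_union_right,
    and_assoc]
  rcases four_point_separation (ρ := 2 * M) (h₁.trans_le' (by linarith)) (h₂.trans_le' (by linarith)) with
    ⟨h₁₂, h₁₃, h₁₄⟩ | ⟨h₂₁, h₂₃, h₂₄⟩ | ⟨h₃₁, h₃₂, h₃₄⟩ | ⟨h₄₁, h₄₂, h₄₃⟩ | ⟨h₁₃, h₁₄, h₂₃, h₂₄⟩
  · exact .inl ⟨far hr₁ hr₂ h₁₂, far hr₁ hs₁ h₁₃, far hr₁ hs₂ h₁₄⟩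
  · exact .inr (.inl ⟨far hr₂ hr₁ h₂₁, far hr₂ hs₁ h₂₃, far hr₂ hs₂ h₂₄⟩)
  · exact .inr (.inr (.inl ⟨far hs₁ hr₁ h₃₁, far hs₁ hr₂ h₃₂, far hs₁ hs₂ h₃₄⟩))
  · exact .inr (.inr (.inr (.inl ⟨far hs₂ hr₁ h₄₁, far hs₂ hr₂ h₄₂, far hs₂ hs₁ h₄₃⟩)))
  · exact .inr (.inr (.inr (.inr
      ⟨far hr₁ hs₁ h₁₃, far hr₂ hs₁ h₂₃, far hr₁ hs₂ h₁₄, far hr₂ hs₂ h₂₄⟩)))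

end FourPoints

theorem stmt_5_general {d : ℕ} (u₁ u₂ u₁' u₂' : Fin d → ℝ) (L₁ L₂ L₁' L₂' R : ℝ)
    (hdist : 8 * max (max (L₁ + R) (L₂ + R)) (max (L₁' + R) (L₂' + R)) <
      min (max ‖u₁ - u₁'‖ ‖u₂ - u₂'‖) (max ‖u₂ - u₁'‖ ‖u₁ - u₂'‖)) :
    -- (A)
    (cube (L₁ + R) u₁ ∩ (cube (L₂ + R) u₂ ∪
        (cube (L₁' + R) u₁' ∪ cube (L₂' + R) u₂')) = ∅) ∨
    -- (B)
    (cube (L₂ + R) u₂ ∩ (cube (L₁ + R) u₁ ∪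
        (cube (L₁' + R) u₁' ∪ cube (L₂' + R) u₂')) = ∅) ∨
    -- (C)
    (cube (L₁' + R) u₁' ∩ ((cube (L₁ + R) u₁ ∪ cube (L₂ + R) u₂) ∪
        cube (L₂' + R) u₂') = ∅) ∨
    -- (D)
    (cube (L₂' + R) u₂' ∩ ((cube (L₁ + R) u₁ ∪ cube (L₂ + R) u₂) ∪
        cube (L₁' + R) u₁') = ∅) ∨
    -- (E)
    ((cube (L₁ + R) u₁ ∪ cube (L₂ + R) u₂) ∩
        (cube (L₁' + R) u₁' ∪ cube (L₂' + R) u₂') = ∅) := by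
  set M := max (max (L₁ + R) (L₂ + R)) (max (L₁' + R) (L₂' + R))
  simp only [← dist_eq_norm] at hdist
  obtain ⟨h₁, h₂⟩ := lt_min_iff.mp hdist
  have shrink {D : ℝ} (h : 8 * M < D) (hD : 0 ≤ D) : 6 * M < D := by linarith
  simp only [cube_eq_closedBall]
  exact closedBall_separation (le_max_of_le_left (le_max_left _ _))
    (le_max_of_le_left (le_max_right _ _)) (le_max_of_le_right (le_max_left _ _))
    (le_max_of_le_right (le_max_right _ _)) (shrink h₁ (by positivity)) (shrink h₂ (by positivity))

/-- geometric separation lemma for sufficiently distant two-particle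
boxes. If `min(‖u−u'‖_max, ‖S(u)−u'‖_max) > 8·max(L₁+R, L₂+R, L₁'+R, L₂'+R)`, then
with `Λ̂ = Λ_{L₁+R}(u₁) × Λ_{L₂+R}(u₂)` and `Λ̂' = Λ_{L₁'+R}(u₁') × Λ_{L₂'+R}(u₂')`
(whose factors are the projections `Π₁, Π₂`), at least one of the five
disjointness alternatives (A)–(E) holds. -/
theorem stmt_5 {d : ℕ} (u₁ u₂ u₁' u₂' : Fin d → ℝ) (L₁ L₂ L₁' L₂' R : ℝ)
    (hL₁ : 1 < L₁) (hL₂ : 1 < L₂) (hL₁' : 1 < L₁') (hL₂' : 1 < L₂') (hR : 0 < R)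
    (hdist : 8 * max (max (L₁ + R) (L₂ + R)) (max (L₁' + R) (L₂' + R)) <
      min (max ‖u₁ - u₁'‖ ‖u₂ - u₂'‖) (max ‖u₂ - u₁'‖ ‖u₁ - u₂'‖)) :
    -- (A)
    (cube (L₁ + R) u₁ ∩ (cube (L₂ + R) u₂ ∪
        (cube (L₁' + R) u₁' ∪ cube (L₂' + R) u₂')) = ∅) ∨
    -- (B)
    (cube (L₂ + R) u₂ ∩ (cube (L₁ + R) u₁ ∪
        (cube (L₁' + R) u₁' ∪ cube (L₂' + R) u₂')) = ∅) ∨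
    -- (C)
    (cube (L₁' + R) u₁' ∩ ((cube (L₁ + R) u₁ ∪ cube (L₂ + R) u₂) ∪
        cube (L₂' + R) u₂') = ∅) ∨
    -- (D)
    (cube (L₂' + R) u₂' ∩ ((cube (L₁ + R) u₁ ∪ cube (L₂ + R) u₂) ∪
        cube (L₁' + R) u₁') = ∅) ∨
    -- (E)
    ((cube (L₁ + R) u₁ ∪ cube (L₂ + R) u₂) ∩
        (cube (L₁' + R) u₁' ∪ cube (L₂' + R) u₂') = ∅) :=
  stmt_5_general u₁ u₂ u₁' u₂' L₁ L₂ L₁' L₂' R hdist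
end
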